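/- Let M be a positive integer with M > (C·x')_j for every x' ∈ F_A(b) and every j = 1,…,k. Then for every x ∈ ℕ^n with A·x = b, the point (0, 0, x) is Pareto-optimal for the extended multiobjective program EMIP(b) if and only if x is Pareto-optimal for MIP_{A,C}(b). -/

import Mathlib

open Matrix

/-- Cast a vector of naturals to a vector of integers. -/
def toInt {n : ℕ} (x : Fin n → ℕ) : Fin n → ℤ := fun i => (x i : ℤ)

/-- `domLt C v u` means `C·v ⪇ C·u`: componentwise `≤` with `C·v ≠ C·u`. -/
def domLt {n k : ℕ} (C : Matrix (Fin k) (Fin n) ℤ) (v u : Fin n → ℤ) : Prop :=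
  (∀ j, C.mulVec v j ≤ C.mulVec u j) ∧ C.mulVec v ≠ C.mulVec u

/-- The feasible set `F_A(b) = {x ∈ ℕ^n : A·x = b}`. -/
def FA {m n : ℕ} (A : Matrix (Fin m) (Fin n) ℤ) (b : Fin m → ℤ) : Set (Fin n → ℕ) :=
  {x | A.mulVec (toInt x) = b}

/-- `x` is Pareto-optimal for `b`: feasible and not dominated by any feasible point. -/
def ParetoOpt {m n k : ℕ} (A : Matrix (Fin m) (Fin n) ℤ) (C : Matrix (Fin k) (Fin n) ℤ)
    (b : Fin m → ℤ) (x : Fin n → ℕ) : Prop :=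
  x ∈ FA A b ∧ ¬ ∃ y ∈ FA A b, domLt C (toInt y) (toInt x)

/-- Feasibility for the extended program `EMIP(b)`:
`(y, z, x)` satisfies `y i - z + (A·x) i = b i` for all `i`. -/
def EFeas {m n : ℕ} (A : Matrix (Fin m) (Fin n) ℤ) (b : Fin m → ℤ)
    (y : Fin m → ℕ) (z : ℕ) (x : Fin n → ℕ) : Prop :=
  ∀ i, (y i : ℤ) - (z : ℤ) + A.mulVec (toInt x) i = b i

/-- The `j`-th objective value of the extended program `EMIP(b)`. -/
def Phi {m n k : ℕ} (C : Matrix (Fin k) (Fin n) ℤ) (M : ℤ)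
    (y : Fin m → ℕ) (z : ℕ) (x : Fin n → ℕ) (j : Fin k) : ℤ :=
  M * ((∑ i, (y i : ℤ)) + (z : ℤ)) + C.mulVec (toInt x) j

/-- Pareto-optimality for the extended program `EMIP(b)`. -/
def EPareto {m n k : ℕ} (A : Matrix (Fin m) (Fin n) ℤ) (C : Matrix (Fin k) (Fin n) ℤ)
    (M : ℤ) (b : Fin m → ℤ) (y : Fin m → ℕ) (z : ℕ) (x : Fin n → ℕ) : Prop :=
  EFeas A b y z x ∧
  ¬ ∃ y' z' x', EFeas A b y' z' x' ∧
      (∀ j, Phi C M y' z' x' j ≤ Phi C M y z x j) ∧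
      (∃ j, Phi C M y' z' x' j < Phi C M y z x j)

/-!
The penalty `M` on the slack variables exceeds every objective value of a feasible point, so a
point dominating `(0, 0, x)` cannot carry any slack; the slack-free points of `EMIP(b)` are
exactly the points of `F_A(b)`, with the same objective values.
-/

section

variable {m n k : ℕ}

theorem domLt_iff_lt (C : Matrix (Fin k) (Fin n) ℤ) (v u : Fin n → ℤ) :
    domLt C v u ↔ C *ᵥ v < C *ᵥ u :=
  (lt_iff_le_and_ne (a := C *ᵥ v)).symm

theorem mulVec_toInt_nonneg {C : Matrix (Fin k) (Fin n) ℤ} (hC : ∀ i j, 0 ≤ C i j)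
    (x : Fin n → ℕ) (j : Fin k) : 0 ≤ (C *ᵥ toInt x) j :=
  Finset.sum_nonneg (s := Finset.univ) fun i _ => mul_nonneg (hC j i) (Int.natCast_nonneg (x i))

theorem eFeas_zero_zero_iff (A : Matrix (Fin m) (Fin n) ℤ) (b : Fin m → ℤ) (x : Fin n → ℕ) :
    EFeas A b 0 0 x ↔ x ∈ FA A b := by
  simp [EFeas, FA, funext_iff]

@[simp]
theorem phi_zero_zero (C : Matrix (Fin k) (Fin n) ℤ) (M : ℤ) (x : Fin n → ℕ) (j : Fin k) :
    Phi C M (0 : Fin m → ℕ) 0 x j = (C *ᵥ toInt x) j := by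
  simp [Phi]

theorem eq_zero_of_phi_lt {C : Matrix (Fin k) (Fin n) ℤ} (hC : ∀ i j, 0 ≤ C i j) {M : ℤ}
    (hM : 0 ≤ M) {y : Fin m → ℕ} {z : ℕ} {x : Fin n → ℕ} {j : Fin k}
    (h : Phi C M y z x j < M) : y = 0 ∧ z = 0 := by
  have hslack : ∑ i, y i + z = 0 := by
    by_contra hpos
    have hone : (1 : ℤ) ≤ ((∑ i, y i + z : ℕ) : ℤ) := by
      exact_mod_cast Nat.one_le_iff_ne_zero.2 hpos
    unfold Phi at h
    push_cast at hone
    nlinarith [mulVec_toInt_nonneg hC x j]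
  simpa [Finset.sum_eq_zero_iff, funext_iff] using hslack

end

theorem emip_pareto_iff_mip_pareto_general {m n k : ℕ}
    (A : Matrix (Fin m) (Fin n) ℤ) (C : Matrix (Fin k) (Fin n) ℤ)
    (hC : ∀ i j, 0 ≤ C i j) (b : Fin m → ℤ)
    (M : ℤ)
    (hM : ∀ x' ∈ FA A b, ∀ j, C.mulVec (toInt x') j < M)
    (x : Fin n → ℕ) (hx : A.mulVec (toInt x) = b) :
    EPareto A C M b 0 0 x ↔ ParetoOpt A C b x := by
  constructor
  · rintro ⟨-, hnd⟩
    refine ⟨hx, fun ⟨y, hy, hdom⟩ => hnd ⟨0, 0, y, (eFeas_zero_zero_iff A b y).2 hy, ?_⟩⟩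
    simpa [domLt_iff_lt, Pi.lt_def, Pi.le_def] using hdom
  · rintro ⟨-, hnd⟩
    refine ⟨(eFeas_zero_zero_iff A b x).2 hx, ?_⟩
    rintro ⟨y', z', x', hfeas, hle, j, hlt⟩
    have hxM : (C *ᵥ toInt x) j < M := hM x hx j
    have hM_nonneg : 0 ≤ M := (mulVec_toInt_nonneg hC x j).trans hxM.le
    have hphiM : Phi C M y' z' x' j < M := (hlt.trans_eq (phi_zero_zero C M x j)).trans hxM
    obtain ⟨rfl, rfl⟩ := eq_zero_of_phi_lt hC hM_nonneg hphiM
    refine hnd ⟨x', (eFeas_zero_zero_iff A b x').1 hfeas, ?_⟩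
    rw [domLt_iff_lt, Pi.lt_def]
    simp only [phi_zero_zero] at hle hlt
    exact ⟨hle, j, hlt⟩

theorem emip_pareto_iff_mip_pareto {m n k : ℕ} (hm : 0 < m) (hn : 0 < n) (hk : 0 < k)
    (A : Matrix (Fin m) (Fin n) ℤ) (C : Matrix (Fin k) (Fin n) ℤ)
    (hC : ∀ i j, 0 ≤ C i j) (b : Fin m → ℤ)
    (M : ℤ) (hMpos : 0 < M)
    (hM : ∀ x' ∈ FA A b, ∀ j, C.mulVec (toInt x') j < M)
    (x : Fin n → ℕ) (hx : A.mulVec (toInt x) = b) :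
    EPareto A C M b 0 0 x ↔ ParetoOpt A C b x :=
  emip_pareto_iff_mip_pareto_general A C hC b M hM x hx
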